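/- arXiv:2012.08465 — 6 statements merged into one kernel-verified Lean document; each statement's English description precedes it below -/
import Mathlib

section
/- Let n ≥ 2 and d ≥ n − 1 be integers. For unit vectors u_1, …, u_n, v_1, …, v_n in ℝ^d, define the cross-entropy loss L(u,v) = Σ_{i=1}^n log( (Σ_{j=1}^n e^{⟨v_j, u_i⟩}) / e^{⟨v_i, u_i⟩} ). Then L(u,v) ≥ n·log(1 + (n−1)·e^{−n/(n−1)}), and equality holds if and only if v_i = u_i for every i and ⟨u_i, u_j⟩ = −1/(n−1) for all i ≠ j (i.e., the u_i form a simplex equiangular tight frame). -/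
/-!
Write the `i`-th term of the loss as `log (1 + ∑_{j ≠ i} exp (⟪v j, u i⟫ - ⟪v i, u i⟫))`.
Jensen's inequality for `exp` bounds the inner sum below by `(n - 1) exp sᵢ`, where `sᵢ` is the
mean of its exponents, and the tangent line at `t = -n / (n - 1)` of the convex function
`s ↦ log (1 + (n - 1) exp s)` makes the bound affine in `sᵢ`. Summed over `i`, `∑ sᵢ - n t` is a
nonnegative multiple of `n² - (n ∑ ⟪v i, u i⟫ - ⟪∑ v, ∑ u⟫)`, which is nonnegative by the identity
`∑ ‖n (v i - u i) + ∑ u‖² + n ‖∑ u‖² = 2 n (n² - (n ∑ ⟪v i, u i⟫ - ⟪∑ v, ∑ u⟫))`.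
At equality this identity gives `v = u`, and strict convexity of `exp` forces every exponent
`⟪u j, u i⟫ - 1` to equal `t`.
-/

open scoped RealInnerProductSpace
open Finset Real

lemma one_add_mul_exp_eq {B : ℝ} (hB : 1 + B ≠ 0) (w : ℝ) :
    1 + B * exp w = (1 + B) * ((1 - B / (1 + B)) + B / (1 + B) * exp w) := by
  field_simp
  ring

lemma add_mul_le_log_one_add_mul_exp {B : ℝ} (hB : 0 ≤ B) (w : ℝ) :
    log (1 + B) + B / (1 + B) * w ≤ log (1 + B * exp w) := by
  have hA : 0 < 1 + B := by linarith
  have hk : B / (1 + B) ≤ 1 := div_le_one_of_le₀ (by linarith) hA.le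
  have hconv := convexOn_exp.2 (Set.mem_univ 0) (Set.mem_univ w) (sub_nonneg.2 hk)
    (by positivity) (sub_add_cancel _ _)
  simp only [smul_eq_mul, mul_zero, zero_add, exp_zero, mul_one] at hconv
  rw [← log_exp (_ * w), ← log_mul hA.ne' (exp_pos _).ne', one_add_mul_exp_eq hA.ne']
  exact log_le_log (by positivity) (mul_le_mul_of_nonneg_left hconv hA.le)

lemma add_mul_lt_log_one_add_mul_exp {B : ℝ} (hB : 0 < B) {w : ℝ} (hw : w ≠ 0) :
    log (1 + B) + B / (1 + B) * w < log (1 + B * exp w) := by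
  have hA : 0 < 1 + B := by linarith
  have hk : B / (1 + B) < 1 := (div_lt_one hA).2 (by linarith)
  have hconv := strictConvexOn_exp.2 (Set.mem_univ 0) (Set.mem_univ w) hw.symm (sub_pos.2 hk)
    (by positivity) (sub_add_cancel _ _)
  simp only [smul_eq_mul, mul_zero, zero_add, exp_zero, mul_one] at hconv
  rw [← log_exp (_ * w), ← log_mul hA.ne' (exp_pos _).ne', one_add_mul_exp_eq hA.ne']
  exact log_lt_log (by positivity) (mul_lt_mul_of_pos_left hconv hA)

section Jensen

variable {ι : Type*}

lemma card_mul_exp_mean_le_sum_exp (s : Finset ι) (δ : ι → ℝ) :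
    #s * exp ((∑ j ∈ s, δ j) / #s) ≤ ∑ j ∈ s, exp (δ j) := by
  rcases s.eq_empty_or_nonempty with rfl | hs
  · simp
  have hc : (0 : ℝ) < #s := by exact_mod_cast hs.card_pos
  have h := convexOn_exp.map_sum_le (t := s) (w := fun _ => (#s : ℝ)⁻¹) (p := δ)
    (fun _ _ => by positivity) (by simp [hc.ne']) (fun _ _ => Set.mem_univ _)
  simp only [smul_eq_mul] at h
  rw [← mul_sum, ← mul_sum, inv_mul_eq_div, inv_mul_eq_div] at h
  rwa [le_div_iff₀' hc] at h

lemma eq_mean_of_sum_exp_eq (s : Finset ι) (δ : ι → ℝ)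
    (h : ∑ j ∈ s, exp (δ j) = #s * exp ((∑ j ∈ s, δ j) / #s)) :
    ∀ j ∈ s, δ j = (∑ j ∈ s, δ j) / #s := by
  rcases s.eq_empty_or_nonempty with rfl | hs
  · simp
  have hc : (0 : ℝ) < #s := by exact_mod_cast hs.card_pos
  have h := (strictConvexOn_exp.map_sum_eq_iff (t := s) (w := fun _ => (#s : ℝ)⁻¹) (p := δ)
    (fun _ _ => by positivity) (by simp [hc.ne']) (fun _ _ => Set.mem_univ _)).1 (by
      simp only [smul_eq_mul]
      rw [← mul_sum, ← mul_sum, h]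
      field_simp)
  simp only [smul_eq_mul] at h
  rwa [← mul_sum, inv_mul_eq_div] at h

lemma le_log_one_add_sum_exp (s : Finset ι) (δ : ι → ℝ) (t : ℝ) :
    log (1 + #s * exp t) + #s * exp t / (1 + #s * exp t) * ((∑ j ∈ s, δ j) / #s - t) ≤
      log (1 + ∑ j ∈ s, exp (δ j)) := by
  calc _ ≤ log (1 + #s * exp t * exp ((∑ j ∈ s, δ j) / #s - t)) :=
        add_mul_le_log_one_add_mul_exp (by positivity) _
    _ = log (1 + #s * exp ((∑ j ∈ s, δ j) / #s)) := by
        rw [mul_assoc, ← exp_add, add_sub_cancel]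
    _ ≤ log (1 + ∑ j ∈ s, exp (δ j)) :=
        log_le_log (by positivity) (by linarith [card_mul_exp_mean_le_sum_exp s δ])

lemma eq_of_log_one_add_sum_exp_eq (s : Finset ι) (δ : ι → ℝ) (t : ℝ)
    (h : log (1 + ∑ j ∈ s, exp (δ j)) =
      log (1 + #s * exp t) + #s * exp t / (1 + #s * exp t) * ((∑ j ∈ s, δ j) / #s - t)) :
    ∀ j ∈ s, δ j = t := by
  rcases s.eq_empty_or_nonempty with rfl | hs
  · simp
  have hB : 0 < #s * exp t := by have := hs.card_pos; positivity
  have hJensen := card_mul_exp_mean_le_sum_exp s δ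
  set μ := (∑ j ∈ s, δ j) / #s
  have hμ : μ = t := by
    by_contra hne
    have htangent := add_mul_lt_log_one_add_mul_exp hB (sub_ne_zero.2 hne)
    rw [mul_assoc, ← exp_add, add_sub_cancel] at htangent
    have := log_le_log (by positivity) (by linarith : 1 + #s * exp μ ≤ 1 + ∑ j ∈ s, exp (δ j))
    linarith
  have hsum : ∑ j ∈ s, exp (δ j) = #s * exp μ := by
    by_contra hne
    have hlt : 1 + #s * exp μ < 1 + ∑ j ∈ s, exp (δ j) := by
      linarith [lt_of_le_of_ne hJensen (Ne.symm hne)]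
    have := log_lt_log (by positivity) hlt
    rw [h, hμ, sub_self, mul_zero, add_zero] at this
    exact lt_irrefl _ this
  intro j hj
  exact (eq_mean_of_sum_exp_eq s δ hsum j hj).trans hμ

end Jensen

section Summation

variable {ι : Type*} {s : Finset ι} {a y : ι → ℝ} {c k : ℝ}

lemma card_mul_le_sum_of_add_mul_le (hk : 0 ≤ k) (hy : 0 ≤ ∑ i ∈ s, y i)
    (h : ∀ i ∈ s, c + k * y i ≤ a i) : #s * c ≤ ∑ i ∈ s, a i :=
  calc #s * c ≤ #s * c + k * ∑ i ∈ s, y i := le_add_of_nonneg_right (mul_nonneg hk hy)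
    _ = ∑ i ∈ s, (c + k * y i) := by rw [sum_add_distrib, mul_sum, sum_const, nsmul_eq_mul]
    _ ≤ ∑ i ∈ s, a i := sum_le_sum h

lemma sum_eq_zero_and_eq_add_mul_of_sum_eq (hk : 0 < k) (hy : 0 ≤ ∑ i ∈ s, y i)
    (h : ∀ i ∈ s, c + k * y i ≤ a i) (heq : ∑ i ∈ s, a i = #s * c) :
    ∑ i ∈ s, y i = 0 ∧ ∀ i ∈ s, a i = c + k * y i := by
  have hslack : ∑ i ∈ s, (a i - (c + k * y i)) = -(k * ∑ i ∈ s, y i) := by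
    rw [sum_sub_distrib, heq, sum_add_distrib, ← mul_sum, sum_const, nsmul_eq_mul]
    ring
  have hnonneg : ∀ i ∈ s, 0 ≤ a i - (c + k * y i) := fun i hi => sub_nonneg.2 (h i hi)
  have hy0 : ∑ i ∈ s, y i = 0 := by
    have := sum_nonneg hnonneg
    rw [hslack] at this
    exact (mul_eq_zero.1 (by nlinarith [mul_nonneg hk.le hy])).resolve_left hk.ne'
  refine ⟨hy0, fun i hi => ?_⟩
  have := (sum_eq_zero_iff_of_nonneg hnonneg).1 (by rw [hslack, hy0, mul_zero, neg_zero]) i hi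
  linarith

end Summation

section Softmax

variable {ι : Type*} [Fintype ι] [DecidableEq ι]

noncomputable def softmaxLoss (x : ι → ℝ) (i : ι) : ℝ :=
  log ((∑ j, exp (x j)) / exp (x i))

lemma softmaxLoss_eq_log_one_add (x : ι → ℝ) (i : ι) :
    softmaxLoss x i = log (1 + ∑ j ∈ univ.erase i, exp (x j - x i)) := by
  rw [softmaxLoss, sum_div, ← add_sum_erase _ _ (mem_univ i), div_self (exp_pos _).ne']
  simp only [exp_sub]

lemma cast_card_univ_erase (i : ι) : (#(univ.erase i) : ℝ) = Fintype.card ι - 1 := by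
  rw [card_erase_of_mem (mem_univ i), card_univ,
    Nat.cast_sub (Fintype.card_pos_iff.2 ⟨i⟩), Nat.cast_one]

lemma sum_univ_erase_sub (x : ι → ℝ) (i : ι) :
    ∑ j ∈ univ.erase i, (x j - x i) = ∑ j, x j - Fintype.card ι * x i := by
  rw [sum_erase _ (sub_self _), sum_sub_distrib, sum_const, card_univ, nsmul_eq_mul]

lemma le_softmaxLoss (x : ι → ℝ) (i : ι) (t : ℝ) :
    log (1 + (Fintype.card ι - 1) * exp t) +
        (Fintype.card ι - 1) * exp t / (1 + (Fintype.card ι - 1) * exp t) *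
          ((∑ j, x j - Fintype.card ι * x i) / (Fintype.card ι - 1) - t) ≤
      softmaxLoss x i := by
  rw [softmaxLoss_eq_log_one_add, ← sum_univ_erase_sub, ← cast_card_univ_erase i]
  exact le_log_one_add_sum_exp _ _ t

lemma sub_eq_of_softmaxLoss_eq (x : ι → ℝ) (i : ι) (t : ℝ)
    (h : softmaxLoss x i = log (1 + (Fintype.card ι - 1) * exp t) +
        (Fintype.card ι - 1) * exp t / (1 + (Fintype.card ι - 1) * exp t) *
          ((∑ j, x j - Fintype.card ι * x i) / (Fintype.card ι - 1) - t)) (j : ι) (hj : j ≠ i) :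
    x j - x i = t := by
  rw [softmaxLoss_eq_log_one_add, ← sum_univ_erase_sub, ← cast_card_univ_erase i] at h
  exact eq_of_log_one_add_sum_exp_eq _ _ t h j (mem_erase.2 ⟨hj, mem_univ j⟩)

lemma softmaxLoss_eq_of_sub_eq (x : ι → ℝ) (i : ι) (t : ℝ) (h : ∀ j, j ≠ i → x j - x i = t) :
    softmaxLoss x i = log (1 + (Fintype.card ι - 1) * exp t) := by
  rw [softmaxLoss_eq_log_one_add, sum_congr rfl fun j hj => by rw [h j (ne_of_mem_erase hj)],
    sum_const, nsmul_eq_mul, cast_card_univ_erase]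

end Softmax

section Alignment

variable {ι E : Type*} [Fintype ι] [NormedAddCommGroup E] [InnerProductSpace ℝ E]
  {u v : ι → E}

lemma sum_norm_card_smul_sub_add_sum_sq (hu : ∀ i, ‖u i‖ = 1) (hv : ∀ i, ‖v i‖ = 1) :
    ∑ i, ‖(Fintype.card ι : ℝ) • (v i - u i) + ∑ j, u j‖ ^ 2 + Fintype.card ι * ‖∑ i, u i‖ ^ 2 =
      2 * Fintype.card ι *
        (Fintype.card ι ^ 2 - (Fintype.card ι * ∑ i, ⟪v i, u i⟫ - ⟪∑ i, v i, ∑ i, u i⟫)) := by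
  have hterm : ∀ i, ‖(Fintype.card ι : ℝ) • (v i - u i) + ∑ j, u j‖ ^ 2 =
      2 * Fintype.card ι ^ 2 - 2 * Fintype.card ι ^ 2 * ⟪v i, u i⟫ +
        2 * Fintype.card ι * ⟪v i, ∑ j, u j⟫ - 2 * Fintype.card ι * ⟪u i, ∑ j, u j⟫ +
        ‖∑ j, u j‖ ^ 2 := by
    intro i
    rw [norm_add_sq_real, norm_smul, mul_pow, norm_sub_sq_real, hu, hv, real_inner_smul_left,
      inner_sub_left, Real.norm_natCast]
    ring
  simp only [hterm, sum_add_distrib, sum_sub_distrib, ← mul_sum, sum_const, card_univ,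
    nsmul_eq_mul, ← sum_inner, real_inner_self_eq_norm_sq]
  ring

lemma card_mul_sum_inner_sub_inner_sum_le (hu : ∀ i, ‖u i‖ = 1) (hv : ∀ i, ‖v i‖ = 1) :
    Fintype.card ι * ∑ i, ⟪v i, u i⟫ - ⟪∑ i, v i, ∑ i, u i⟫ ≤ Fintype.card ι ^ 2 := by
  rcases isEmpty_or_nonempty ι with _ | _
  · simp
  have hid := sum_norm_card_smul_sub_add_sum_sq hu hv
  have hpos : 0 ≤ 2 * (Fintype.card ι : ℝ) *
      (Fintype.card ι ^ 2 - (Fintype.card ι * ∑ i, ⟪v i, u i⟫ - ⟪∑ i, v i, ∑ i, u i⟫)) := by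
    rw [← hid]; positivity
  have := (mul_nonneg_iff_of_pos_left (by positivity)).1 hpos
  linarith

lemma eq_of_card_mul_sum_inner_sub_inner_sum_eq (hu : ∀ i, ‖u i‖ = 1) (hv : ∀ i, ‖v i‖ = 1)
    (h : Fintype.card ι * ∑ i, ⟪v i, u i⟫ - ⟪∑ i, v i, ∑ i, u i⟫ = Fintype.card ι ^ 2) (i : ι) :
    v i = u i := by
  have hn : (0 : ℝ) < Fintype.card ι := by have := Fintype.card_pos_iff.2 ⟨i⟩; positivity
  have hid := sum_norm_card_smul_sub_add_sum_sq hu hv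
  rw [h, sub_self, mul_zero] at hid
  obtain ⟨hterms, hS⟩ := (add_eq_zero_iff_of_nonneg (by positivity) (by positivity)).1 hid
  have hS : ∑ j, u j = 0 := by simpa [hn.ne'] using hS
  have hi := (sum_eq_zero_iff_of_nonneg (fun _ _ => by positivity)).1 hterms i (mem_univ i)
  simpa [hS, hn.ne', sub_eq_zero] using hi

end Alignment

section CrossEntropy

variable {ι E : Type*} [Fintype ι] [NormedAddCommGroup E] [InnerProductSpace ℝ E]
  {u v : ι → E}

noncomputable def crossEntropy (u v : ι → E) : ℝ :=
  ∑ i, softmaxLoss (fun j => ⟪v j, u i⟫) i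

lemma sum_margin_div_sub (u v : ι → E) :
    ∑ i, ((∑ j, ⟪v j, u i⟫ - Fintype.card ι * ⟪v i, u i⟫) / (Fintype.card ι - 1) -
        -Fintype.card ι / (Fintype.card ι - 1)) =
      (Fintype.card ι ^ 2 - (Fintype.card ι * ∑ i, ⟪v i, u i⟫ - ⟪∑ i, v i, ∑ i, u i⟫)) /
        (Fintype.card ι - 1) := by
  rw [sum_sub_distrib, ← sum_div, sum_sub_distrib, ← mul_sum, sum_inner, sum_comm,
    sum_const, card_univ, nsmul_eq_mul]
  simp only [inner_sum]
  ring

lemma sum_margin_div_sub_nonneg [Nonempty ι] (hu : ∀ i, ‖u i‖ = 1) (hv : ∀ i, ‖v i‖ = 1) :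
    0 ≤ ∑ i, ((∑ j, ⟪v j, u i⟫ - Fintype.card ι * ⟪v i, u i⟫) / (Fintype.card ι - 1) -
        -Fintype.card ι / (Fintype.card ι - 1)) := by
  have : (1 : ℝ) ≤ Fintype.card ι := by exact_mod_cast Fintype.card_pos
  exact sum_margin_div_sub u v ▸ div_nonneg
    (sub_nonneg.2 (card_mul_sum_inner_sub_inner_sum_le hu hv)) (sub_nonneg.2 this)

theorem le_crossEntropy [DecidableEq ι] (hι : 2 ≤ Fintype.card ι) (hu : ∀ i, ‖u i‖ = 1)
    (hv : ∀ i, ‖v i‖ = 1) :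
    Fintype.card ι * log (1 + (Fintype.card ι - 1) *
      exp (-Fintype.card ι / (Fintype.card ι - 1))) ≤ crossEntropy u v := by
  have hm : (0 : ℝ) < Fintype.card ι - 1 := sub_pos.2 (by exact_mod_cast hι)
  have : Nonempty ι := Fintype.card_pos_iff.1 (by omega)
  rw [crossEntropy]
  simpa only [card_univ] using card_mul_le_sum_of_add_mul_le (by positivity)
    (sum_margin_div_sub_nonneg hu hv)
    fun i _ => le_softmaxLoss (fun j => ⟪v j, u i⟫) i _

theorem crossEntropy_eq_iff [DecidableEq ι] (hι : 2 ≤ Fintype.card ι) (hu : ∀ i, ‖u i‖ = 1)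
    (hv : ∀ i, ‖v i‖ = 1) :
    crossEntropy u v = Fintype.card ι * log (1 + (Fintype.card ι - 1) *
        exp (-Fintype.card ι / (Fintype.card ι - 1))) ↔
      (∀ i, v i = u i) ∧ ∀ i j, i ≠ j → ⟪u i, u j⟫ = -1 / (Fintype.card ι - 1) := by
  have hm : (0 : ℝ) < Fintype.card ι - 1 := sub_pos.2 (by exact_mod_cast hι)
  have : Nonempty ι := Fintype.card_pos_iff.1 (by omega)
  have hunit : ∀ i, ⟪u i, u i⟫ = 1 := fun i => by rw [real_inner_self_eq_norm_sq, hu, one_pow]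
  have hETF_sub : -1 / ((Fintype.card ι : ℝ) - 1) - 1 = -Fintype.card ι / (Fintype.card ι - 1) := by
    field_simp
    ring
  rw [crossEntropy]
  constructor
  · intro heq
    obtain ⟨hmargin, hrow⟩ := sum_eq_zero_and_eq_add_mul_of_sum_eq (s := univ) (by positivity)
      (sum_margin_div_sub_nonneg hu hv) (fun i _ => le_softmaxLoss (fun j => ⟪v j, u i⟫) i _)
      (by rw [heq, card_univ])
    rw [sum_margin_div_sub, div_eq_zero_iff, sub_eq_zero, or_iff_left hm.ne'] at hmargin
    have hvu := eq_of_card_mul_sum_inner_sub_inner_sum_eq hu hv hmargin.symm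
    refine ⟨hvu, fun i j hij => ?_⟩
    have := sub_eq_of_softmaxLoss_eq _ j _ (hrow j (mem_univ j)) i hij
    rw [hvu, hvu, hunit] at this
    linarith
  · rintro ⟨hvu, hETF⟩
    rw [sum_congr rfl fun i _ => softmaxLoss_eq_of_sub_eq _ i _ fun j hj => ?_, sum_const,
      card_univ, nsmul_eq_mul]
    simp only [hvu, hunit, hETF j i hj, hETF_sub]

end CrossEntropy

theorem cross_entropy_min_simplex_ETF_general (n d : ℕ) (hn : 2 ≤ n)
    (u v : Fin n → EuclideanSpace ℝ (Fin d))
    (hu : ∀ i, ‖u i‖ = 1) (hv : ∀ i, ‖v i‖ = 1) :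
    (n : ℝ) * Real.log (1 + ((n : ℝ) - 1) * Real.exp (-(n : ℝ) / ((n : ℝ) - 1))) ≤
      (∑ i, Real.log ((∑ j, Real.exp ⟪v j, u i⟫) / Real.exp ⟪v i, u i⟫)) ∧
    ((∑ i, Real.log ((∑ j, Real.exp ⟪v j, u i⟫) / Real.exp ⟪v i, u i⟫)) =
        (n : ℝ) * Real.log (1 + ((n : ℝ) - 1) * Real.exp (-(n : ℝ) / ((n : ℝ) - 1))) ↔
      (∀ i, v i = u i) ∧ ∀ i j, i ≠ j → ⟪u i, u j⟫ = -1 / ((n : ℝ) - 1)) := by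
  have hcard : 2 ≤ Fintype.card (Fin n) := by rwa [Fintype.card_fin]
  have hle := le_crossEntropy hcard hu hv
  have hiff := crossEntropy_eq_iff hcard hu hv
  rw [Fintype.card_fin] at hle hiff
  exact ⟨hle, hiff⟩

/-- For `n ≥ 2`, `d ≥ n - 1` and unit vectors `u i, v i` in `ℝ^d`, the
cross-entropy loss `L(u,v) = ∑ i, log ((∑ j, exp ⟪v j, u i⟫) / exp ⟪v i, u i⟫)` is bounded
below by `n * log (1 + (n-1) * exp (-n/(n-1)))`, with equality iff `v = u` and the `u i`
form a simplex equiangular tight frame. -/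
theorem cross_entropy_min_simplex_ETF (n d : ℕ) (hn : 2 ≤ n) (hd : n - 1 ≤ d)
    (u v : Fin n → EuclideanSpace ℝ (Fin d))
    (hu : ∀ i, ‖u i‖ = 1) (hv : ∀ i, ‖v i‖ = 1) :
    (n : ℝ) * Real.log (1 + ((n : ℝ) - 1) * Real.exp (-(n : ℝ) / ((n : ℝ) - 1))) ≤
      (∑ i, Real.log ((∑ j, Real.exp ⟪v j, u i⟫) / Real.exp ⟪v i, u i⟫)) ∧
    ((∑ i, Real.log ((∑ j, Real.exp ⟪v j, u i⟫) / Real.exp ⟪v i, u i⟫)) =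
        (n : ℝ) * Real.log (1 + ((n : ℝ) - 1) * Real.exp (-(n : ℝ) / ((n : ℝ) - 1))) ↔
      (∀ i, v i = u i) ∧ ∀ i j, i ≠ j → ⟪u i, u j⟫ = -1 / ((n : ℝ) - 1)) :=
  cross_entropy_min_simplex_ETF_general n d hn u v hu hv
end

section
/- Let n ≥ 2 and d ≥ n − 1 be integers and let α > 0. For unit vectors u_1, …, u_n in ℝ^d, define L_α(u) = Σ_{i=1}^n log( 1 + Σ_{j≠i} e^{α(⟨u_j, u_i⟩ − 1)} ). Then L_α(u) ≥ n·log(1 + (n−1)·e^{−nα/(n−1)}), and equality holds if and only if ⟨u_i, u_j⟩ = −1/(n−1) for all i ≠ j (i.e., the u_i form a simplex equiangular tight frame). -/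
/-!
For unit vectors the `i`-th summand of the loss is `log ∑ j, exp (α * (G i j - 1))`, a
log-sum-exp of the `i`-th row of the Gram matrix `G`.
Log-sum-exp is convex, and its tangent at a row of the simplex Gram matrix has softmax weights
that take one common value off the diagonal. Summing the tangent inequalities over the rows gives
`L(G) ≥ L(simplex) + κ ∑ i j, G i j` with `κ > 0`, while `∑ i j, G i j = ‖∑ i, u i‖² ≥ 0`.
The tangent inequality is Jensen's inequality for the strictly concave `log`, so it is strict
unless the row coincides with the simplex row.
-/

open scoped RealInnerProductSpace BigOperators

open Finset Real Matrix

section LogSumExp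

variable {ι : Type*} (s : Finset ι) (x y : ι → ℝ)

noncomputable def softmax (j : ι) : ℝ := exp (y j) / ∑ k ∈ s, exp (y k)

variable {s}

theorem softmax_pos {j : ι} (hj : j ∈ s) : 0 < softmax s y j :=
  div_pos (exp_pos _) (sum_pos (fun _ _ => exp_pos _) ⟨j, hj⟩)

theorem sum_softmax (hs : s.Nonempty) : ∑ j ∈ s, softmax s y j = 1 := by
  simp only [softmax, ← sum_div, div_self (sum_pos (fun _ _ => exp_pos _) hs).ne']

theorem log_sum_exp_sub_log_sum_exp (hs : s.Nonempty) :
    log (∑ j ∈ s, exp (x j)) - log (∑ j ∈ s, exp (y j)) =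
      log (∑ j ∈ s, softmax s y j * exp (x j - y j)) := by
  rw [← log_div (sum_pos (fun _ _ => exp_pos _) hs).ne' (sum_pos (fun _ _ => exp_pos _) hs).ne',
    sum_div]
  refine congrArg log (sum_congr rfl fun j _ => ?_)
  rw [softmax, exp_sub, div_mul_div_comm, mul_comm, mul_div_mul_right _ _ (exp_pos _).ne']

theorem log_sum_exp_add_sum_softmax_mul_sub_le :
    log (∑ j ∈ s, exp (y j)) + ∑ j ∈ s, softmax s y j * (x j - y j) ≤
      log (∑ j ∈ s, exp (x j)) := by
  obtain rfl | hs := s.eq_empty_or_nonempty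
  · simp
  have := strictConcaveOn_log_Ioi.concaveOn.le_map_sum (t := s) (p := fun j => exp (x j - y j))
    (fun j hj => (softmax_pos y hj).le) (sum_softmax y hs) (fun _ _ => exp_pos _)
  simp only [smul_eq_mul, log_exp, ← log_sum_exp_sub_log_sum_exp x y hs] at this
  linarith

theorem log_sum_exp_add_sum_softmax_mul_sub_lt (h : ∃ j ∈ s, ∃ k ∈ s, x j - y j ≠ x k - y k) :
    log (∑ j ∈ s, exp (y j)) + ∑ j ∈ s, softmax s y j * (x j - y j) <
      log (∑ j ∈ s, exp (x j)) := by
  obtain ⟨j, hj, k, hk, hjk⟩ := h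
  have := strictConcaveOn_log_Ioi.lt_map_sum (t := s) (p := fun j => exp (x j - y j))
    (fun j hj => softmax_pos y hj) (sum_softmax y ⟨j, hj⟩) (fun _ _ => exp_pos _)
    ⟨j, hj, k, hk, exp_injective.ne hjk⟩
  simp only [smul_eq_mul, log_exp, ← log_sum_exp_sub_log_sum_exp x y ⟨j, hj⟩] at this
  linarith

end LogSumExp

section SimplexGram

variable {ι : Type*} [Fintype ι]

local notation "N" => (Fintype.card ι : ℝ)

/-- The paper's `L_α` with the Gram matrix as argument; the diagonal term `exp (α * (G i i - 1))`
is the `1` of the paper when `G` has unit diagonal. -/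
noncomputable def symmetricLoss (α : ℝ) (G : Matrix ι ι ℝ) : ℝ :=
  ∑ i, log (∑ j, exp (α * (G i j - 1)))

theorem card_sub_one_pos (hι : 2 ≤ Fintype.card ι) : 0 < N - 1 := by
  have : (2 : ℝ) ≤ N := by exact_mod_cast hι
  linarith

variable [DecidableEq ι]

variable (ι) in
noncomputable def simplexGram : Matrix ι ι ℝ :=
  Matrix.of fun i j => if i = j then 1 else -1 / (N - 1)

theorem simplexGram_apply (i j : ι) :
    simplexGram ι i j = if i = j then 1 else -1 / (N - 1) := rfl

theorem sum_comp_simplexGram_row (f : ℝ → ℝ) (i : ι) :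
    ∑ j, f (simplexGram ι i j) = f 1 + (N - 1) * f (-1 / (N - 1)) := by
  have hoff (j) (hj : j ∈ univ.erase i) : f (simplexGram ι i j) = f (-1 / (N - 1)) := by
    simp [simplexGram_apply, (ne_of_mem_erase hj).symm]
  rw [← add_sum_erase _ _ (mem_univ i), sum_congr rfl hoff, sum_const,
    card_erase_of_mem (mem_univ i), card_univ, nsmul_eq_mul,
    Nat.cast_sub (Fintype.card_pos_iff.2 ⟨i⟩)]
  simp [simplexGram_apply]

theorem sum_simplexGram (hι : 2 ≤ Fintype.card ι) : ∑ i, ∑ j, simplexGram ι i j = 0 := by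
  have hrow (i : ι) : ∑ j, simplexGram ι i j = 0 := by
    simpa [mul_div_cancel₀ _ (card_sub_one_pos hι).ne'] using sum_comp_simplexGram_row id i
  simp [hrow]

variable (α : ℝ)

theorem mul_simplexGram_sub_one_of_ne (hι : 2 ≤ Fintype.card ι) {i j : ι} (hij : i ≠ j) :
    α * (simplexGram ι i j - 1) = -(N * α) / (N - 1) := by
  have := (card_sub_one_pos hι).ne'
  rw [simplexGram_apply, if_neg hij]
  field_simp
  ring

theorem sum_exp_simplexGram_row (hι : 2 ≤ Fintype.card ι) (i : ι) :
    ∑ j, exp (α * (simplexGram ι i j - 1)) = 1 + (N - 1) * exp (-(N * α) / (N - 1)) := by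
  have := (card_sub_one_pos hι).ne'
  rw [sum_comp_simplexGram_row (fun t => exp (α * (t - 1)))]
  congr 3
  · simp
  · field_simp
    ring

theorem symmetricLoss_simplexGram (hι : 2 ≤ Fintype.card ι) :
    symmetricLoss α (simplexGram ι) = N * log (1 + (N - 1) * exp (-(N * α) / (N - 1))) := by
  simp [symmetricLoss, sum_exp_simplexGram_row α hι]

variable {α} {G : Matrix ι ι ℝ}

theorem sum_softmax_simplexGram_mul_sub (hι : 2 ≤ Fintype.card ι) (hG : ∀ i, G i i = 1) :
    ∑ i, ∑ j, softmax univ (fun j => α * (simplexGram ι i j - 1)) j *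
        (α * (G i j - 1) - α * (simplexGram ι i j - 1)) =
      α * exp (-(N * α) / (N - 1)) / (1 + (N - 1) * exp (-(N * α) / (N - 1))) *
        ∑ i, ∑ j, G i j := by
  have hterm (i j : ι) : softmax univ (fun j => α * (simplexGram ι i j - 1)) j *
        (α * (G i j - 1) - α * (simplexGram ι i j - 1)) =
      α * exp (-(N * α) / (N - 1)) / (1 + (N - 1) * exp (-(N * α) / (N - 1))) *
        (G i j - simplexGram ι i j) := by
    rw [← mul_sub, sub_sub_sub_cancel_right, softmax, sum_exp_simplexGram_row α hι]
    obtain rfl | hij := eq_or_ne i j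
    · simp [hG, simplexGram_apply]
    · rw [mul_simplexGram_sub_one_of_ne α hι hij]
      ring
  simp only [hterm, ← mul_sum, sum_sub_distrib, sum_simplexGram hι, sub_zero]

theorem symmetricLoss_simplexGram_add_le (hι : 2 ≤ Fintype.card ι) (hG : ∀ i, G i i = 1) :
    symmetricLoss α (simplexGram ι) +
        α * exp (-(N * α) / (N - 1)) / (1 + (N - 1) * exp (-(N * α) / (N - 1))) *
          ∑ i, ∑ j, G i j ≤ symmetricLoss α G := by
  rw [← sum_softmax_simplexGram_mul_sub hι hG, symmetricLoss, symmetricLoss, ← sum_add_distrib]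
  exact sum_le_sum fun i _ => log_sum_exp_add_sum_softmax_mul_sub_le _ _

theorem symmetricLoss_simplexGram_add_lt (hι : 2 ≤ Fintype.card ι) (hα : α ≠ 0)
    (hG : ∀ i, G i i = 1) (hne : G ≠ simplexGram ι) :
    symmetricLoss α (simplexGram ι) +
        α * exp (-(N * α) / (N - 1)) / (1 + (N - 1) * exp (-(N * α) / (N - 1))) *
          ∑ i, ∑ j, G i j < symmetricLoss α G := by
  obtain ⟨i, j, hij⟩ : ∃ i j, G i j ≠ simplexGram ι i j := by
    by_contra! h
    exact hne (Matrix.ext h)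
  rw [← sum_softmax_simplexGram_mul_sub hι hG, symmetricLoss, symmetricLoss, ← sum_add_distrib]
  refine sum_lt_sum (fun i _ => log_sum_exp_add_sum_softmax_mul_sub_le _ _)
    ⟨i, mem_univ i, log_sum_exp_add_sum_softmax_mul_sub_lt _ _ ⟨j, mem_univ j, i, mem_univ i, ?_⟩⟩
  simpa [hG, simplexGram_apply, hα, sub_eq_zero] using hij

theorem symmetricLoss_simplexGram_le (hι : 2 ≤ Fintype.card ι) (hα : 0 ≤ α)
    (hG : ∀ i, G i i = 1) (hsum : 0 ≤ ∑ i, ∑ j, G i j) :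
    symmetricLoss α (simplexGram ι) ≤ symmetricLoss α G := by
  have := card_sub_one_pos hι
  exact le_trans (le_add_of_nonneg_right (mul_nonneg (by positivity) hsum))
    (symmetricLoss_simplexGram_add_le hι hG)

theorem symmetricLoss_simplexGram_lt (hι : 2 ≤ Fintype.card ι) (hα : 0 < α)
    (hG : ∀ i, G i i = 1) (hsum : 0 ≤ ∑ i, ∑ j, G i j) (hne : G ≠ simplexGram ι) :
    symmetricLoss α (simplexGram ι) < symmetricLoss α G := by
  have := card_sub_one_pos hι
  exact lt_of_le_of_lt (le_add_of_nonneg_right (mul_nonneg (by positivity) hsum))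
    (symmetricLoss_simplexGram_add_lt hι hα.ne' hG hne)

end SimplexGram

section Gram

variable {ι E : Type*} [NormedAddCommGroup E] [InnerProductSpace ℝ E] {u : ι → E}

theorem gram_diag_of_norm_eq_one (hu : ∀ i, ‖u i‖ = 1) (i : ι) : gram ℝ u i i = 1 := by
  simp [hu]

variable [Fintype ι]

theorem sum_sum_gram_nonneg (u : ι → E) : 0 ≤ ∑ i, ∑ j, gram ℝ u i j := by
  have h := real_inner_self_nonneg (x := ∑ i, u i)
  rw [sum_inner] at h
  simpa only [inner_sum, gram_apply] using h

variable [DecidableEq ι]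

theorem symmetricLoss_gram (hu : ∀ i, ‖u i‖ = 1) (α : ℝ) :
    symmetricLoss α (gram ℝ u) =
      ∑ i, log (1 + ∑ j ∈ univ.erase i, exp (α * (⟪u j, u i⟫ - 1))) := by
  refine sum_congr rfl fun i _ => ?_
  rw [← add_sum_erase _ _ (mem_univ i), gram_diag_of_norm_eq_one hu]
  simp [real_inner_comm]

theorem gram_eq_simplexGram_iff (hu : ∀ i, ‖u i‖ = 1) :
    gram ℝ u = simplexGram ι ↔
      ∀ i j, i ≠ j → ⟪u i, u j⟫ = -1 / ((Fintype.card ι : ℝ) - 1) := by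
  refine ⟨fun h i j hij => ?_, fun h => Matrix.ext fun i j => ?_⟩
  · simpa [simplexGram_apply, hij] using congrFun (congrFun h i) j
  · obtain rfl | hij := eq_or_ne i j
    · rw [gram_diag_of_norm_eq_one hu, simplexGram_apply, if_pos rfl]
    · simp [simplexGram_apply, hij, h i j hij]

end Gram

theorem symmetric_loss_min_simplex_ETF_general (n d : ℕ) (hn : 2 ≤ n)
    (α : ℝ) (hα : 0 < α)
    (u : Fin n → EuclideanSpace ℝ (Fin d)) (hu : ∀ i, ‖u i‖ = 1) :
    (n : ℝ) * Real.log (1 + ((n : ℝ) - 1) * Real.exp (-((n : ℝ) * α) / ((n : ℝ) - 1))) ≤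
      (∑ i, Real.log (1 + ∑ j ∈ Finset.univ.erase i, Real.exp (α * (⟪u j, u i⟫ - 1)))) ∧
    ((∑ i, Real.log (1 + ∑ j ∈ Finset.univ.erase i, Real.exp (α * (⟪u j, u i⟫ - 1)))) =
        (n : ℝ) * Real.log (1 + ((n : ℝ) - 1) * Real.exp (-((n : ℝ) * α) / ((n : ℝ) - 1))) ↔
      ∀ i j, i ≠ j → ⟪u i, u j⟫ = -1 / ((n : ℝ) - 1)) := by
  have hn' : 2 ≤ Fintype.card (Fin n) := by simpa using hn
  have hsimplex := symmetricLoss_simplexGram α hn'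
  have hETF := gram_eq_simplexGram_iff hu
  simp only [Fintype.card_fin] at hsimplex hETF
  rw [← symmetricLoss_gram hu, ← hsimplex, ← hETF]
  have hdiag := gram_diag_of_norm_eq_one hu
  refine ⟨symmetricLoss_simplexGram_le hn' hα.le hdiag (sum_sum_gram_nonneg u),
    fun h => ?_, fun h => h ▸ rfl⟩
  by_contra hne
  exact (symmetricLoss_simplexGram_lt hn' hα hdiag (sum_sum_gram_nonneg u) hne).ne' h

/-- For `n ≥ 2`, `d ≥ n - 1`, `α > 0` and unit vectors `u i` in `ℝ^d`, the
symmetric loss `L_α(u) = ∑ i, log (1 + ∑_{j ≠ i} exp (α (⟪u j, u i⟫ - 1)))` is bounded below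
by `n * log (1 + (n-1) * exp (-nα/(n-1)))`, with equality iff the `u i` form a simplex
equiangular tight frame. -/
theorem symmetric_loss_min_simplex_ETF (n d : ℕ) (hn : 2 ≤ n) (hd : n - 1 ≤ d)
    (α : ℝ) (hα : 0 < α)
    (u : Fin n → EuclideanSpace ℝ (Fin d)) (hu : ∀ i, ‖u i‖ = 1) :
    (n : ℝ) * Real.log (1 + ((n : ℝ) - 1) * Real.exp (-((n : ℝ) * α) / ((n : ℝ) - 1))) ≤
      (∑ i, Real.log (1 + ∑ j ∈ Finset.univ.erase i, Real.exp (α * (⟪u j, u i⟫ - 1)))) ∧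
    ((∑ i, Real.log (1 + ∑ j ∈ Finset.univ.erase i, Real.exp (α * (⟪u j, u i⟫ - 1)))) =
        (n : ℝ) * Real.log (1 + ((n : ℝ) - 1) * Real.exp (-((n : ℝ) * α) / ((n : ℝ) - 1))) ↔
      ∀ i j, i ≠ j → ⟪u i, u j⟫ = -1 / ((n : ℝ) - 1)) :=
  symmetric_loss_min_simplex_ETF_general n d hn α hα u hu
end

section
/- Let n ≥ 2, d ≥ 1 be integers and let α > 0. For any unit vectors u_1, …, u_n in ℝ^d, the loss L_α(u) = Σ_{i=1}^n log( 1 + Σ_{j≠i} e^{α(⟨u_j, u_i⟩ − 1)} ) satisfies the lower bound L_α(u) ≥ n·log(1 + (n−1)·e^{−nα/(n−1)}). -/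
/-!
Write `a_ij = α (⟪u_j, u_i⟫ - 1)` and let `s_i` be the mean of `a_ij` over `j ≠ i`. Jensen for `exp`
gives `∑_{j ≠ i} exp a_ij ≥ (n - 1) exp s_i`, and Jensen for the convex function
`t ↦ log (1 + (n - 1) eᵗ)` bounds the loss below by `n log (1 + (n - 1) exp s̄)`, `s̄` the mean of the
`s_i`. Finally `∑_{i,j} ⟪u_j, u_i⟫ = ‖∑ u_i‖² ≥ 0` forces `s̄ ≥ -nα/(n - 1)`.
-/

open Finset Real
open scoped RealInnerProductSpace

lemma convexOn_log_one_add_mul_exp {c : ℝ} (hc : 0 ≤ c) :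
    ConvexOn ℝ Set.univ fun t => log (1 + c * exp t) := by
  have hpos (t : ℝ) : 0 < 1 + c * exp t := by positivity
  have hderiv (t : ℝ) : HasDerivAt (fun t => log (1 + c * exp t)) (1 - (1 + c * exp t)⁻¹) t := by
    convert (((hasDerivAt_exp t).const_mul c).const_add 1).log (hpos t).ne' using 1
    field_simp
    ring
  refine Monotone.convexOn_univ_of_deriv (fun t => (hderiv t).differentiableAt) ?_
  rw [funext fun t => (hderiv t).deriv]
  intro x y hxy
  have := inv_anti₀ (hpos x) (by gcongr : 1 + c * exp x ≤ 1 + c * exp y)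
  linarith

lemma ConvexOn.card_mul_map_sum_div_card_le {ι : Type*} {D : Set ℝ} {f : ℝ → ℝ}
    (hf : ConvexOn ℝ D f) {s : Finset ι} (hs : s.Nonempty) {p : ι → ℝ} (hp : ∀ i ∈ s, p i ∈ D) :
    #s * f ((∑ i ∈ s, p i) / #s) ≤ ∑ i ∈ s, f (p i) := by
  have hcard : (0 : ℝ) < #s := by exact_mod_cast hs.card_pos
  have hw : ∑ _i ∈ s, (#s : ℝ)⁻¹ = 1 := by
    rw [sum_const, nsmul_eq_mul, mul_inv_cancel₀ hcard.ne']
  have := hf.map_sum_le (fun _ _ => inv_nonneg.2 hcard.le) hw hp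
  simp only [smul_eq_mul, ← mul_sum] at this
  rw [div_eq_inv_mul]
  calc (#s : ℝ) * f ((#s : ℝ)⁻¹ * ∑ i ∈ s, p i) ≤ #s * ((#s : ℝ)⁻¹ * ∑ i ∈ s, f (p i)) := by
        gcongr
    _ = ∑ i ∈ s, f (p i) := by field_simp

lemma log_one_add_card_mul_exp_le {ι : Type*} {s : Finset ι} (hs : s.Nonempty) (p : ι → ℝ) :
    log (1 + #s * exp ((∑ i ∈ s, p i) / #s)) ≤ log (1 + ∑ i ∈ s, exp (p i)) := by
  gcongr
  exact convexOn_exp.card_mul_map_sum_div_card_le hs fun _ _ => Set.mem_univ _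

lemma sum_sum_inner_eq_norm_sum_sq {ι E : Type*} [Fintype ι] [NormedAddCommGroup E]
    [InnerProductSpace ℝ E] (u : ι → E) : ∑ i, ∑ j, ⟪u j, u i⟫ = ‖∑ i, u i‖ ^ 2 := by
  rw [← real_inner_self_eq_norm_sq, sum_inner]
  simp only [inner_sum]
  exact sum_comm

lemma neg_card_sq_mul_le_sum_sum_erase_mul_inner_sub_one {ι E : Type*} [Fintype ι]
    [DecidableEq ι] [NormedAddCommGroup E] [InnerProductSpace ℝ E] {u : ι → E}
    (hu : ∀ i, ‖u i‖ = 1) {α : ℝ} (hα : 0 ≤ α) :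
    -(Fintype.card ι ^ 2 * α) ≤ ∑ i, ∑ j ∈ univ.erase i, α * (⟪u j, u i⟫ - 1) := by
  -- the diagonal terms `α (‖u i‖² - 1)` vanish
  have hdiag (i : ι) : ∑ j ∈ univ.erase i, α * (⟪u j, u i⟫ - 1) = ∑ j, α * (⟪u j, u i⟫ - 1) :=
    sum_erase _ (by simp [hu])
  rw [sum_congr rfl fun i _ => hdiag i]
  simp only [mul_sub, mul_one, sum_sub_distrib, ← mul_sum, sum_sum_inner_eq_norm_sum_sq,
    sum_const, card_univ, nsmul_eq_mul]
  nlinarith [mul_nonneg hα (sq_nonneg ‖∑ i, u i‖)]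

theorem symmetric_loss_lower_bound_general (n d : ℕ) (hn : 2 ≤ n)
    (α : ℝ) (hα : 0 < α)
    (u : Fin n → EuclideanSpace ℝ (Fin d)) (hu : ∀ i, ‖u i‖ = 1) :
    (n : ℝ) * Real.log (1 + ((n : ℝ) - 1) * Real.exp (-((n : ℝ) * α) / ((n : ℝ) - 1))) ≤
      ∑ i, Real.log (1 + ∑ j ∈ Finset.univ.erase i, Real.exp (α * (⟪u j, u i⟫ - 1))) := by
  set c : ℝ := n - 1
  have hc : 0 < c := by
    have : (2 : ℝ) ≤ n := by exact_mod_cast hn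
    linarith
  have hcard (i : Fin n) : (#(univ.erase i) : ℝ) = c := by
    rw [card_erase_of_mem (mem_univ i), card_univ, Fintype.card_fin, Nat.cast_pred (by omega)]
  set s : Fin n → ℝ := fun i => (∑ j ∈ univ.erase i, α * (⟪u j, u i⟫ - 1)) / c
  have hmean : -(n * α) / c ≤ (∑ i, s i) / n := by
    have hoff := neg_card_sq_mul_le_sum_sum_erase_mul_inner_sub_one hu hα.le
    rw [Fintype.card_fin] at hoff
    rw [← sum_div, div_div, le_div_iff₀ (by positivity)]
    field_simp
    nlinarith
  calc (n : ℝ) * log (1 + c * exp (-(n * α) / c))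
      ≤ n * log (1 + c * exp ((∑ i, s i) / n)) := by gcongr
    _ ≤ ∑ i, log (1 + c * exp (s i)) := by
      simpa using (convexOn_log_one_add_mul_exp hc.le).card_mul_map_sum_div_card_le
        ⟨⟨0, by omega⟩, mem_univ _⟩ (p := s) fun _ _ => Set.mem_univ _
    _ ≤ _ := sum_le_sum fun i _ => by
      have hne : (univ.erase i).Nonempty := card_pos.1 (Nat.cast_pos.1 ((hcard i).symm ▸ hc))
      simpa only [hcard i, s] using log_one_add_card_mul_exp_le hne (fun j => α * (⟪u j, u i⟫ - 1))

/-- For `n ≥ 2`, `d ≥ 1`, `α > 0` and unit vectors `u i` in `ℝ^d`, the loss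
`L_α(u) = ∑ i, log (1 + ∑_{j ≠ i} exp (α (⟪u j, u i⟫ - 1)))` satisfies the lower bound
`L_α(u) ≥ n * log (1 + (n-1) * exp (-nα/(n-1)))`. -/
theorem symmetric_loss_lower_bound (n d : ℕ) (hn : 2 ≤ n) (hd : 1 ≤ d)
    (α : ℝ) (hα : 0 < α)
    (u : Fin n → EuclideanSpace ℝ (Fin d)) (hu : ∀ i, ‖u i‖ = 1) :
    (n : ℝ) * Real.log (1 + ((n : ℝ) - 1) * Real.exp (-((n : ℝ) * α) / ((n : ℝ) - 1))) ≤
      ∑ i, Real.log (1 + ∑ j ∈ Finset.univ.erase i, Real.exp (α * (⟪u j, u i⟫ - 1))) :=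
  symmetric_loss_lower_bound_general n d hn α hα u hu
end

section
/- Let n ≥ 1 be an integer and let u_1, …, u_n, v_1, …, v_n be unit vectors in ℝ^d. Then n · Σ_{i=1}^n ⟨v_i, u_i⟩ − ⟨ Σ_{i=1}^n v_i , Σ_{i=1}^n u_i ⟩ ≤ n². -/
/-!
Write `L = (n I - 1 1ᵀ) ⊗ I_d` for the Laplacian of the complete graph on the index set, acting
blockwise on families of vectors. The left-hand side is `⟪v, L u⟫` in `ℓ²(Fin n; ℝ^d)`, and
`‖L u‖² = n² ‖u‖² - n ‖∑ i, u i‖² ≤ n² ‖u‖²`, so Cauchy–Schwarz bounds it by `n ‖v‖ ‖u‖`.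
For unit vectors `‖u‖ = ‖v‖ = √n`, which gives `n²`.
-/

open scoped RealInnerProductSpace BigOperators

open Finset

section CompleteLaplacian

variable {ι E : Type*} [Fintype ι] [NormedAddCommGroup E] [InnerProductSpace ℝ E]

def completeLaplacian (u : ι → E) (i : ι) : E :=
  (Fintype.card ι : ℝ) • u i - ∑ j, u j

theorem sum_inner_completeLaplacian (u v : ι → E) :
    ∑ i, ⟪v i, completeLaplacian u i⟫ =
      (Fintype.card ι : ℝ) * ∑ i, ⟪v i, u i⟫ - ⟪∑ i, v i, ∑ i, u i⟫ := by
  simp only [completeLaplacian, inner_sub_right, real_inner_smul_right, sum_sub_distrib,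
    mul_sum, sum_inner]

theorem sum_norm_sq_completeLaplacian (u : ι → E) :
    ∑ i, ‖completeLaplacian u i‖ ^ 2 =
      (Fintype.card ι : ℝ) ^ 2 * ∑ i, ‖u i‖ ^ 2 - Fintype.card ι * ‖∑ i, u i‖ ^ 2 := by
  have hcross : ∑ i, ⟪(Fintype.card ι : ℝ) • u i, ∑ j, u j⟫ = Fintype.card ι * ‖∑ i, u i‖ ^ 2 := by
    rw [← sum_inner, ← smul_sum, real_inner_smul_left, real_inner_self_eq_norm_sq]
  simp only [completeLaplacian, norm_sub_sq_real, sum_add_distrib, sum_sub_distrib, ← mul_sum,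
    hcross, norm_smul, mul_pow, Real.norm_natCast, ← mul_sum, sum_const, card_univ, nsmul_eq_mul]
  ring

theorem sum_norm_sq_completeLaplacian_le (u : ι → E) :
    ∑ i, ‖completeLaplacian u i‖ ^ 2 ≤ (Fintype.card ι : ℝ) ^ 2 * ∑ i, ‖u i‖ ^ 2 := by
  rw [sum_norm_sq_completeLaplacian]
  have : 0 ≤ (Fintype.card ι : ℝ) * ‖∑ i, u i‖ ^ 2 := by positivity
  linarith

end CompleteLaplacian

theorem sum_inner_le_sqrt_mul_sqrt {ι E : Type*} [NormedAddCommGroup E] [InnerProductSpace ℝ E]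
    (s : Finset ι) (v w : ι → E) :
    ∑ i ∈ s, ⟪v i, w i⟫ ≤ √(∑ i ∈ s, ‖v i‖ ^ 2) * √(∑ i ∈ s, ‖w i‖ ^ 2) :=
  (sum_le_sum fun i _ => real_inner_le_norm (v i) (w i)).trans
    (Real.sum_mul_le_sqrt_mul_sqrt s _ _)

theorem card_mul_sum_inner_sub_inner_sum_sum_le {ι E : Type*} [Fintype ι] [NormedAddCommGroup E]
    [InnerProductSpace ℝ E] (u v : ι → E) :
    (Fintype.card ι : ℝ) * ∑ i, ⟪v i, u i⟫ - ⟪∑ i, v i, ∑ i, u i⟫ ≤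
      Fintype.card ι * √(∑ i, ‖v i‖ ^ 2) * √(∑ i, ‖u i‖ ^ 2) := by
  calc (Fintype.card ι : ℝ) * ∑ i, ⟪v i, u i⟫ - ⟪∑ i, v i, ∑ i, u i⟫
      = ∑ i, ⟪v i, completeLaplacian u i⟫ := (sum_inner_completeLaplacian u v).symm
    _ ≤ √(∑ i, ‖v i‖ ^ 2) * √(∑ i, ‖completeLaplacian u i‖ ^ 2) :=
        sum_inner_le_sqrt_mul_sqrt _ _ _
    _ ≤ √(∑ i, ‖v i‖ ^ 2) * √((Fintype.card ι : ℝ) ^ 2 * ∑ i, ‖u i‖ ^ 2) := by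
        gcongr
        exact sum_norm_sq_completeLaplacian_le u
    _ = Fintype.card ι * √(∑ i, ‖v i‖ ^ 2) * √(∑ i, ‖u i‖ ^ 2) := by
        rw [Real.sqrt_mul (by positivity), Real.sqrt_sq (by positivity)]
        ring

theorem quadratic_form_upper_bound_general (n d : ℕ)
    (u v : Fin n → EuclideanSpace ℝ (Fin d))
    (hu : ∀ i, ‖u i‖ = 1) (hv : ∀ i, ‖v i‖ = 1) :
    (n : ℝ) * (∑ i, ⟪v i, u i⟫) - ⟪∑ i, v i, ∑ i, u i⟫ ≤ (n : ℝ) ^ 2 := by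
  have hsq : ∀ w : Fin n → EuclideanSpace ℝ (Fin d), (∀ i, ‖w i‖ = 1) →
      √(∑ i, ‖w i‖ ^ 2) = √n := fun w hw => by simp [hw]
  have := card_mul_sum_inner_sub_inner_sum_sum_le u v
  rw [Fintype.card_fin, hsq u hu, hsq v hv, mul_assoc, Real.mul_self_sqrt n.cast_nonneg] at this
  simpa [sq] using this

/-- For `n ≥ 1` unit vectors `u i, v i` in `ℝ^d`,
`n ∑ i, ⟪v i, u i⟫ - ⟪∑ i, v i, ∑ i, u i⟫ ≤ n²`. -/
theorem quadratic_form_upper_bound (n d : ℕ) (hn : 1 ≤ n)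
    (u v : Fin n → EuclideanSpace ℝ (Fin d))
    (hu : ∀ i, ‖u i‖ = 1) (hv : ∀ i, ‖v i‖ = 1) :
    (n : ℝ) * (∑ i, ⟪v i, u i⟫) - ⟪∑ i, v i, ∑ i, u i⟫ ≤ (n : ℝ) ^ 2 :=
  quadratic_form_upper_bound_general n d u v hu hv
end

section
/- Let d ≥ 2, let S = {x ∈ ℝ^d : ‖x‖ = 1} be the unit sphere, and fix α > 0. Define L_α(μ) = ∫_S log( ∫_S e^{α(⟨x,y⟩ − 1)} dμ(y) ) dμ(x) for Borel probability measures μ on S. If a sequence (μ_k) of Borel probability measures on S converges weakly to a probability measure μ, then L_α(μ_k) → L_α(μ); that is, L_α is weakly continuous on the space of probability measures on S. -/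
open scoped RealInnerProductSpace BigOperators Topology
open MeasureTheory Filter

/-! The potentials `x ↦ ∫ K(x,y) dμ_k(y)` of a continuous kernel on a compact space are
uniformly equicontinuous, so by Arzelà–Ascoli their pointwise convergence (weak convergence tested
against `K(x, ·)`) is uniform. A positive kernel takes values in some `[m, M] ⊂ (0, ∞)`, hence so
do its potentials, and `log` is uniformly continuous there: the log-potentials converge uniformly
as well. Uniform convergence of bounded continuous integrands together with weak convergence of
the measures gives convergence of the integrals. -/

open Set BoundedContinuousFunction

theorem Continuous.exists_pos_forall_mem_Icc {Y : Type*} [TopologicalSpace Y] [CompactSpace Y]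
    {f : Y → ℝ} (hf : Continuous f) (hfpos : ∀ y, 0 < f y) :
    ∃ m M, 0 < m ∧ ∀ y, f y ∈ Icc m M := by
  obtain ⟨m, hm, hmf⟩ := isCompact_univ.exists_forall_le' hf.continuousOn fun y _ => hfpos y
  obtain ⟨M, hM⟩ := (isCompact_range hf).bddAbove
  exact ⟨m, M, hm, fun y => ⟨hmf y trivial, hM (mem_range_self y)⟩⟩

section

variable {X ι : Type*} [TopologicalSpace X] [MeasurableSpace X] [OpensMeasurableSpace X]
  {l : Filter ι}

theorem tendsto_integral_of_tendsto_measure_of_tendsto_integrand {μs : ι → ProbabilityMeasure X}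
    {μ : ProbabilityMeasure X} (hμ : Tendsto μs l (𝓝 μ)) {G : ι → X →ᵇ ℝ} {g : X →ᵇ ℝ}
    (hG : Tendsto G l (𝓝 g)) :
    Tendsto (fun i => ∫ x, G i x ∂(μs i : Measure X)) l (𝓝 (∫ x, g x ∂(μ : Measure X))) := by
  have hsub : Tendsto (fun i => ∫ x, (G i - g) x ∂(μs i : Measure X)) l (𝓝 0) :=
    squeeze_zero_norm (fun i => (G i - g).norm_integral_le_norm _)
      (tendsto_iff_norm_sub_tendsto_zero.1 hG)
  have hsum := hsub.add (ProbabilityMeasure.tendsto_iff_forall_integral_tendsto.1 hμ g)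
  rw [zero_add] at hsum
  refine hsum.congr fun i => ?_
  rw [coe_sub, Pi.sub_def, integral_sub ((G i).integrable _) (g.integrable _), sub_add_cancel]

end

section

variable {X ι : Type*} [PseudoMetricSpace X] [CompactSpace X] [MeasurableSpace X]
  [OpensMeasurableSpace X] {K : X × X → ℝ} {l : Filter ι}

theorem integrable_kernel_right (hK : Continuous K) (ν : Measure X) [IsFiniteMeasure ν] (x : X) :
    Integrable (fun y => K (x, y)) ν :=
  (mkOfCompact ⟨fun y => K (x, y), by fun_prop⟩).integrable ν

theorem uniformEquicontinuous_integral_kernel (hK : Continuous K) (μs : ι → Measure X)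
    [∀ i, IsProbabilityMeasure (μs i)] :
    UniformEquicontinuous fun i x => ∫ y, K (x, y) ∂μs i := by
  rw [Metric.uniformEquicontinuous_iff]
  intro ε hε
  obtain ⟨δ, hδ, hKδ⟩ := Metric.uniformContinuous_iff.1
    (CompactSpace.uniformContinuous_of_continuous hK) (ε / 2) (half_pos hε)
  refine ⟨δ, hδ, fun x x' hxx' i => ?_⟩
  rw [dist_eq_norm, ← integral_sub (integrable_kernel_right hK _ x)
    (integrable_kernel_right hK _ x')]
  calc ‖∫ y, (K (x, y) - K (x', y)) ∂μs i‖ ≤ ε / 2 * (μs i).real univ :=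
        norm_integral_le_of_norm_le_const <| ae_of_all _ fun y =>
          (hKδ (a := (x, y)) (b := (x', y)) (by simpa [Prod.dist_eq] using hxx')).le
    _ < ε := by simp [hε]

theorem continuous_integral_kernel (hK : Continuous K) (ν : Measure X) [IsProbabilityMeasure ν] :
    Continuous fun x => ∫ y, K (x, y) ∂ν :=
  (uniformEquicontinuous_integral_kernel hK fun _ : Unit => ν).equicontinuous.continuous ()

theorem tendstoUniformly_integral_kernel (hK : Continuous K) {μs : ι → ProbabilityMeasure X}
    {μ : ProbabilityMeasure X} (hμ : Tendsto μs l (𝓝 μ)) :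
    TendstoUniformly (fun i x => ∫ y, K (x, y) ∂(μs i : Measure X))
      (fun x => ∫ y, K (x, y) ∂(μ : Measure X)) l := by
  refine UniformFun.tendsto_iff_tendstoUniformly.1 <|
    ((uniformEquicontinuous_integral_kernel hK fun i => (μs i : Measure X)).equicontinuous
    |>.tendsto_uniformFun_iff_pi _ _).2 (tendsto_pi_nhds.2 fun x => ?_)
  exact ProbabilityMeasure.tendsto_iff_forall_integral_tendsto.1 hμ
    (mkOfCompact ⟨fun y => K (x, y), by fun_prop⟩)

theorem integral_kernel_mem_Icc (hK : Continuous K) {m M : ℝ} (hKmM : ∀ p, K p ∈ Icc m M)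
    (ν : Measure X) [IsProbabilityMeasure ν] (x : X) : ∫ y, K (x, y) ∂ν ∈ Icc m M :=
  (convex_Icc m M).integral_mem isClosed_Icc (ae_of_all _ fun y => hKmM (x, y))
    (integrable_kernel_right hK ν x)

theorem continuous_log_integral_kernel (hK : Continuous K) (hKpos : ∀ p, 0 < K p)
    (ν : Measure X) [IsProbabilityMeasure ν] :
    Continuous fun x => Real.log (∫ y, K (x, y) ∂ν) := by
  obtain ⟨m, M, hm, hKmM⟩ := hK.exists_pos_forall_mem_Icc hKpos
  exact (continuous_integral_kernel hK ν).log fun x =>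
    (hm.trans_le (integral_kernel_mem_Icc hK hKmM ν x).1).ne'

theorem tendstoUniformly_log_integral_kernel (hK : Continuous K) (hKpos : ∀ p, 0 < K p)
    {μs : ι → ProbabilityMeasure X} {μ : ProbabilityMeasure X} (hμ : Tendsto μs l (𝓝 μ)) :
    TendstoUniformly (fun i x => Real.log (∫ y, K (x, y) ∂(μs i : Measure X)))
      (fun x => Real.log (∫ y, K (x, y) ∂(μ : Measure X))) l := by
  obtain ⟨m, M, hm, hKmM⟩ := hK.exists_pos_forall_mem_Icc hKpos
  have hlog : UniformContinuousOn Real.log (Icc m M) :=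
    isCompact_Icc.uniformContinuousOn_of_continuous
      (Real.continuousOn_log.mono fun t ht => (hm.trans_le ht.1).ne')
  exact hlog.comp_tendstoUniformly (fun i => integral_kernel_mem_Icc hK hKmM _)
    (integral_kernel_mem_Icc hK hKmM _) (tendstoUniformly_integral_kernel hK hμ)

theorem tendsto_integral_log_integral_kernel (hK : Continuous K) (hKpos : ∀ p, 0 < K p)
    {μs : ι → ProbabilityMeasure X} {μ : ProbabilityMeasure X} (hμ : Tendsto μs l (𝓝 μ)) :
    Tendsto (fun i => ∫ x, Real.log (∫ y, K (x, y) ∂(μs i : Measure X)) ∂(μs i : Measure X)) l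
      (𝓝 (∫ x, Real.log (∫ y, K (x, y) ∂(μ : Measure X)) ∂(μ : Measure X))) := by
  let logPotential (ν : ProbabilityMeasure X) : X →ᵇ ℝ :=
    mkOfCompact ⟨_, continuous_log_integral_kernel hK hKpos ν⟩
  exact tendsto_integral_of_tendsto_measure_of_tendsto_integrand hμ
    (G := fun i => logPotential (μs i)) (g := logPotential μ)
    (tendsto_iff_tendstoUniformly.2 (tendstoUniformly_log_integral_kernel hK hKpos hμ))

end

theorem loss_weakly_continuous_general (d : ℕ) (α : ℝ)
    (μseq : ℕ → Measure (Metric.sphere (0 : EuclideanSpace ℝ (Fin d)) 1))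
    (hseq : ∀ k, IsProbabilityMeasure (μseq k))
    (μ : Measure (Metric.sphere (0 : EuclideanSpace ℝ (Fin d)) 1))
    (hμ : IsProbabilityMeasure μ)
    (hweak : ∀ f : BoundedContinuousFunction
        (Metric.sphere (0 : EuclideanSpace ℝ (Fin d)) 1) ℝ,
      Tendsto (fun k => ∫ x, f x ∂(μseq k)) atTop (𝓝 (∫ x, f x ∂μ))) :
    Tendsto (fun k =>
        ∫ x, Real.log (∫ y, Real.exp (α * (⟪(x : EuclideanSpace ℝ (Fin d)),
          (y : EuclideanSpace ℝ (Fin d))⟫ - 1)) ∂(μseq k)) ∂(μseq k))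
      atTop
      (𝓝 (∫ x, Real.log (∫ y, Real.exp (α * (⟪(x : EuclideanSpace ℝ (Fin d)),
          (y : EuclideanSpace ℝ (Fin d))⟫ - 1)) ∂μ) ∂μ)) := by
  let νs (k : ℕ) : ProbabilityMeasure (Metric.sphere (0 : EuclideanSpace ℝ (Fin d)) 1) :=
    ⟨μseq k, hseq k⟩
  let ν : ProbabilityMeasure (Metric.sphere (0 : EuclideanSpace ℝ (Fin d)) 1) := ⟨μ, hμ⟩
  have hconv : Tendsto νs atTop (𝓝 ν) :=
    ProbabilityMeasure.tendsto_iff_forall_integral_tendsto.2 hweak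
  exact tendsto_integral_log_integral_kernel
    (X := Metric.sphere (0 : EuclideanSpace ℝ (Fin d)) 1)
    (K := fun p => Real.exp (α * (⟪(p.1 : EuclideanSpace ℝ (Fin d)), p.2⟫ - 1)))
    (by fun_prop) (fun _ => Real.exp_pos _) hconv

/-- On the unit sphere `S ⊂ ℝ^d`, `d ≥ 2`, with `α > 0`, the functional
`L_α(μ) = ∫ log (∫ exp (α (⟪x,y⟫ - 1)) dμ(y)) dμ(x)` is weakly continuous: if probability
measures `μ_k` converge weakly to a probability measure `μ` (i.e. integrals of all bounded
continuous functions converge), then `L_α(μ_k) → L_α(μ)`. -/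
theorem loss_weakly_continuous (d : ℕ) (hd : 2 ≤ d) (α : ℝ) (hα : 0 < α)
    (μseq : ℕ → Measure (Metric.sphere (0 : EuclideanSpace ℝ (Fin d)) 1))
    (hseq : ∀ k, IsProbabilityMeasure (μseq k))
    (μ : Measure (Metric.sphere (0 : EuclideanSpace ℝ (Fin d)) 1))
    (hμ : IsProbabilityMeasure μ)
    (hweak : ∀ f : BoundedContinuousFunction
        (Metric.sphere (0 : EuclideanSpace ℝ (Fin d)) 1) ℝ,
      Tendsto (fun k => ∫ x, f x ∂(μseq k)) atTop (𝓝 (∫ x, f x ∂μ))) :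
    Tendsto (fun k =>
        ∫ x, Real.log (∫ y, Real.exp (α * (⟪(x : EuclideanSpace ℝ (Fin d)),
          (y : EuclideanSpace ℝ (Fin d))⟫ - 1)) ∂(μseq k)) ∂(μseq k))
      atTop
      (𝓝 (∫ x, Real.log (∫ y, Real.exp (α * (⟪(x : EuclideanSpace ℝ (Fin d)),
          (y : EuclideanSpace ℝ (Fin d))⟫ - 1)) ∂μ) ∂μ)) :=
  loss_weakly_continuous_general d α μseq hseq μ hμ hweak
end

section
/- Let n ≥ 1, d ≥ 1 be integers and let u_1, …, u_n be unit vectors in ℝ^d. Then the frame potential satisfies F(u_1, …, u_n) = Σ_{i,j=1}^n ⟨u_i, u_j⟩² ≥ n²/d, with equality if and only if the vectors form a unit norm tight frame, i.e., Σ_{i=1}^n ⟨u, u_i⟩² = (n/d)·‖u‖² for every u ∈ ℝ^d. -/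
/-!
The frame operator `S = ∑ᵢ ⟪uᵢ, ·⟫ uᵢ` is symmetric, with `⟪S w, w⟫ = ∑ᵢ ⟪w, uᵢ⟫²`,
`trace S = ∑ᵢ ‖uᵢ‖² = n` and `trace S² = ∑ᵢⱼ ⟪uᵢ, uⱼ⟫²`. For a symmetric `T` on a
`d`-dimensional space and `c = trace T / d`, expanding gives
`0 ≤ trace ((T - c)²) = trace T² - (trace T)² / d`, and the left side vanishes only for
`T = c • 1`. So the frame potential is at least `n² / d`, with equality iff `S = (n / d) • 1`,
which is the tight frame condition read through the quadratic form of `S`.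
-/

open scoped RealInnerProductSpace

open Module LinearMap InnerProductSpace

section

variable {E : Type*} [NormedAddCommGroup E] [InnerProductSpace ℝ E]

theorem LinearMap.trace_sub_smul_one_mul_self [FiniteDimensional ℝ E] (T : E →ₗ[ℝ] E) :
    trace ℝ E ((T - (trace ℝ E T / finrank ℝ E) • 1) * (T - (trace ℝ E T / finrank ℝ E) • 1)) =
      trace ℝ E (T * T) - trace ℝ E T ^ 2 / finrank ℝ E := by
  set t := trace ℝ E T
  set d : ℝ := (finrank ℝ E : ℝ)
  have h : t / d * (2 * t) - (t / d) ^ 2 * d = t ^ 2 / d := by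
    rcases eq_or_ne d 0 with hd | hd
    · simp [hd]
    · field_simp; ring
  simp only [sub_mul, mul_sub, smul_mul_assoc, mul_smul_comm, one_mul, mul_one,
    map_sub, map_smul, trace_one, smul_eq_mul]
  linear_combination -h

namespace LinearMap.IsSymmetric

variable {T : E →ₗ[ℝ] E}

theorem sub_smul_one (hT : T.IsSymmetric) (c : ℝ) : (T - c • 1).IsSymmetric :=
  hT.sub (IsSymmetric.one.smul (conj_trivial c))

theorem eq_smul_one_iff (hT : T.IsSymmetric) (c : ℝ) :
    T = c • 1 ↔ ∀ x, ⟪T x, x⟫ = c * ‖x‖ ^ 2 := by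
  rw [← sub_eq_zero, ← (hT.sub_smul_one c).inner_map_self_eq_zero]
  simp [inner_sub_left, real_inner_smul_left, sub_eq_zero]

theorem trace_mul_self_eq_sum_norm_sq (hT : T.IsSymmetric) {ι : Type*} [Fintype ι]
    (b : OrthonormalBasis ι ℝ E) : trace ℝ E (T * T) = ∑ a, ‖T (b a)‖ ^ 2 := by
  rw [trace_eq_sum_inner _ b]
  refine Finset.sum_congr rfl fun a _ => ?_
  rw [Module.End.mul_apply, ← hT, real_inner_self_eq_norm_sq]

variable [FiniteDimensional ℝ E]

theorem trace_mul_self_nonneg (hT : T.IsSymmetric) : 0 ≤ trace ℝ E (T * T) := by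
  rw [hT.trace_mul_self_eq_sum_norm_sq (stdOrthonormalBasis ℝ E)]
  positivity

theorem trace_mul_self_eq_zero_iff (hT : T.IsSymmetric) : trace ℝ E (T * T) = 0 ↔ T = 0 := by
  refine ⟨fun h => ?_, fun h => by simp [h]⟩
  set b := stdOrthonormalBasis ℝ E
  rw [hT.trace_mul_self_eq_sum_norm_sq b,
    Finset.sum_eq_zero_iff_of_nonneg fun _ _ => by positivity] at h
  exact b.toBasis.ext fun a => by simpa using h a (Finset.mem_univ a)

theorem sq_trace_div_finrank_le_trace_mul_self (hT : T.IsSymmetric) :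
    trace ℝ E T ^ 2 / finrank ℝ E ≤ trace ℝ E (T * T) := by
  have := (hT.sub_smul_one (trace ℝ E T / finrank ℝ E)).trace_mul_self_nonneg
  rw [T.trace_sub_smul_one_mul_self] at this
  linarith

theorem trace_mul_self_eq_sq_trace_div_finrank_iff (hT : T.IsSymmetric) :
    trace ℝ E (T * T) = trace ℝ E T ^ 2 / finrank ℝ E ↔
      T = (trace ℝ E T / finrank ℝ E) • 1 := by
  rw [← sub_eq_zero, ← T.trace_sub_smul_one_mul_self,
    (hT.sub_smul_one _).trace_mul_self_eq_zero_iff, sub_eq_zero]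

end LinearMap.IsSymmetric

variable {ι : Type*} [Fintype ι] (u : ι → E)

noncomputable def frameOperator : E →ₗ[ℝ] E :=
  ∑ i, (rankOne ℝ (u i) (u i) : E →ₗ[ℝ] E)

theorem frameOperator_apply (x : E) : frameOperator u x = ∑ i, ⟪u i, x⟫ • u i := by
  simp [frameOperator]

theorem isSymmetric_frameOperator : (frameOperator u).IsSymmetric :=
  isSymmetric_sum _ fun i _ => isSymmetric_rankOne_self (u i)

theorem inner_frameOperator_self (x : E) : ⟪frameOperator u x, x⟫ = ∑ i, ⟪x, u i⟫ ^ 2 := by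
  rw [frameOperator_apply, sum_inner]
  refine Finset.sum_congr rfl fun i _ => ?_
  rw [real_inner_smul_left, real_inner_comm, sq]

theorem frameOperator_eq_smul_one_iff (c : ℝ) :
    frameOperator u = c • 1 ↔ ∀ x, ∑ i, ⟪x, u i⟫ ^ 2 = c * ‖x‖ ^ 2 := by
  simp_rw [(isSymmetric_frameOperator u).eq_smul_one_iff, inner_frameOperator_self]

variable [FiniteDimensional ℝ E]

theorem trace_mul_frameOperator (T : E →ₗ[ℝ] E) :
    trace ℝ E (T * frameOperator u) = ∑ i, ⟪u i, T (u i)⟫ := by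
  have h (x : E) : T * rankOne ℝ x x = (rankOne ℝ (T x) x : E →ₗ[ℝ] E) := by ext; simp
  simp [frameOperator, Finset.mul_sum, h, trace_rankOne]

theorem trace_frameOperator : trace ℝ E (frameOperator u) = ∑ i, ‖u i‖ ^ 2 := by
  simpa [real_inner_self_eq_norm_sq] using trace_mul_frameOperator u 1

theorem trace_frameOperator_mul_self :
    trace ℝ E (frameOperator u * frameOperator u) = ∑ i, ∑ j, ⟪u i, u j⟫ ^ 2 := by
  simp [trace_mul_frameOperator, frameOperator_apply, inner_sum, real_inner_smul_right,
    real_inner_comm, sq]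

end

theorem frame_potential_lower_bound_general (n d : ℕ)
    (u : Fin n → EuclideanSpace ℝ (Fin d)) (hu : ∀ i, ‖u i‖ = 1) :
    (n : ℝ) ^ 2 / d ≤ (∑ i, ∑ j, ⟪u i, u j⟫ ^ 2) ∧
    ((∑ i, ∑ j, ⟪u i, u j⟫ ^ 2) = (n : ℝ) ^ 2 / d ↔
      ∀ w : EuclideanSpace ℝ (Fin d), ∑ i, ⟪w, u i⟫ ^ 2 = ((n : ℝ) / d) * ‖w‖ ^ 2) := by
  have hS := isSymmetric_frameOperator u
  have htrace : trace ℝ _ (frameOperator u) = n := by simp [trace_frameOperator, hu]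
  have hdim : (finrank ℝ (EuclideanSpace ℝ (Fin d)) : ℝ) = d := by simp
  rw [← trace_frameOperator_mul_self, ← frameOperator_eq_smul_one_iff, ← htrace, ← hdim]
  exact ⟨hS.sq_trace_div_finrank_le_trace_mul_self, hS.trace_mul_self_eq_sq_trace_div_finrank_iff⟩

/-- (Benedetto–Fickus) For `n ≥ 1` unit vectors `u i` in `ℝ^d`, `d ≥ 1`,
the frame potential satisfies `∑_{i,j} ⟪u i, u j⟫² ≥ n²/d`, with equality iff the vectors
form a unit norm tight frame: `∑ i, ⟪u, u i⟫² = (n/d) ‖u‖²` for every `u ∈ ℝ^d`. -/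
theorem frame_potential_lower_bound (n d : ℕ) (hn : 1 ≤ n) (hd : 1 ≤ d)
    (u : Fin n → EuclideanSpace ℝ (Fin d)) (hu : ∀ i, ‖u i‖ = 1) :
    (n : ℝ) ^ 2 / d ≤ (∑ i, ∑ j, ⟪u i, u j⟫ ^ 2) ∧
    ((∑ i, ∑ j, ⟪u i, u j⟫ ^ 2) = (n : ℝ) ^ 2 / d ↔
      ∀ w : EuclideanSpace ℝ (Fin d), ∑ i, ⟪w, u i⟫ ^ 2 = ((n : ℝ) / d) * ‖w‖ ^ 2) :=
  frame_potential_lower_bound_general n d u hu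
end
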